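/- A first-order sentence S of the form ∀X₁ C₁ ∧ … ∧ ∀Xₙ Cₙ, where the Xᵢ are finite sets of variables and the Cᵢ are quantifier-free formulas without equality, is unsatisfiable if and only if there exists a finite unsatisfiable conjunction of ground instances of formulas Cᵢ (i ∈ {1,…,n}), where the instances are obtained by instantiating all variables with ground terms formed from the function symbols occurring in S and, if no constant occurs in S, one additional fresh constant. -/

import Mathlib

open Classical

namespace CTIF

/-- First-order terms: variables and applications of function symbols
(a function symbol is a natural number used with an arity). -/
inductive Tm : Type where
  | var : ℕ → Tm
  | app : ℕ → (n : ℕ) → (Fin n → Tm) → Tm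

/-- First-order formulas without equality. -/
inductive Fml : Type where
  | tru : Fml
  | fls : Fml
  | atom : ℕ → (n : ℕ) → (Fin n → Tm) → Fml
  | neg : Fml → Fml
  | conj : Fml → Fml → Fml
  | disj : Fml → Fml → Fml
  | all : ℕ → Fml → Fml
  | exi : ℕ → Fml → Fml

/-- A structure: interpretation of all function and predicate symbols (at every arity). -/
structure Struc (D : Type) : Type where
  fn : ℕ → (n : ℕ) → (Fin n → D) → D
  pr : ℕ → (n : ℕ) → (Fin n → D) → Prop

def Tm.eval {D : Type} (M : Struc D) (a : ℕ → D) : Tm → D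
  | .var x => a x
  | .app f n ts => M.fn f n (fun i => (ts i).eval M a)

def Fml.sat {D : Type} : Fml → Struc D → (ℕ → D) → Prop
  | .tru, _, _ => True
  | .fls, _, _ => False
  | .atom p n ts, M, a => M.pr p n (fun i => (ts i).eval M a)
  | .neg F, M, a => ¬ F.sat M a
  | .conj F G, M, a => F.sat M a ∧ G.sat M a
  | .disj F G, M, a => F.sat M a ∨ G.sat M a
  | .all x F, M, a => ∀ d, F.sat M (Function.update a x d)
  | .exi x F, M, a => ∃ d, F.sat M (Function.update a x d)

/-- Entailment: every model (with any variable assignment) of `F` satisfies `G`. -/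
def entails (F G : Fml) : Prop :=
  ∀ (D : Type), Nonempty D → ∀ (M : Struc D) (a : ℕ → D), F.sat M a → G.sat M a

def Tm.vars : Tm → Set ℕ
  | .var x => {x}
  | .app _ _ ts => ⋃ i, (ts i).vars

/-- Function symbols (with their arity) occurring in a term. -/
def Tm.funs : Tm → Set (ℕ × ℕ)
  | .var _ => ∅
  | .app f n ts => insert (f, n) (⋃ i, (ts i).funs)

def Tm.isGround (t : Tm) : Prop := t.vars = ∅

/-- `t` is a ground term all of whose function symbols come from `S`. -/
def Tm.builtFrom (S : Set (ℕ × ℕ)) : Tm → Prop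
  | .var _ => False
  | .app f n ts => (f, n) ∈ S ∧ ∀ i, Tm.builtFrom S (ts i)

/-- `t` occurs (as a subterm) in the given term. -/
def Tm.occursIn (t : Tm) : Tm → Prop
  | .var x => t = Tm.var x
  | .app f n ts => t = Tm.app f n ts ∨ ∃ i, Tm.occursIn t (ts i)

/-- `s` is a strict subterm of `t`. -/
def Tm.strictSub (s t : Tm) : Prop := s ≠ t ∧ s.occursIn t

def Fml.funs : Fml → Set (ℕ × ℕ)
  | .tru => ∅
  | .fls => ∅
  | .atom _ _ ts => ⋃ i, (ts i).funs
  | .neg F => F.funs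
  | .conj F G => F.funs ∪ G.funs
  | .disj F G => F.funs ∪ G.funs
  | .all _ F => F.funs
  | .exi _ F => F.funs

/-- Predicate symbols with the polarity (`true` = positive) of their occurrences;
the second argument is the polarity of the context. -/
def Fml.preds : Fml → Bool → Set (ℕ × Bool)
  | .tru, _ => ∅
  | .fls, _ => ∅
  | .atom p _ _, pol => {(p, pol)}
  | .neg F, pol => F.preds (!pol)
  | .conj F G, pol => F.preds pol ∪ G.preds pol
  | .disj F G, pol => F.preds pol ∪ G.preds pol
  | .all _ F, pol => F.preds pol
  | .exi _ F, pol => F.preds pol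

/-- pred(F): predicates paired with the polarities of their occurrences in `F`. -/
def Fml.pred (F : Fml) : Set (ℕ × Bool) := F.preds true

/-- Predicate symbols occurring in a formula (disregarding polarity). -/
def Fml.predSyms : Fml → Set ℕ
  | .tru => ∅
  | .fls => ∅
  | .atom p _ _ => {p}
  | .neg F => F.predSyms
  | .conj F G => F.predSyms ∪ G.predSyms
  | .disj F G => F.predSyms ∪ G.predSyms
  | .all _ F => F.predSyms
  | .exi _ F => F.predSyms

def Fml.free : Fml → Set ℕ
  | .tru => ∅
  | .fls => ∅
  | .atom _ _ ts => ⋃ i, (ts i).vars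
  | .neg F => F.free
  | .conj F G => F.free ∪ G.free
  | .disj F G => F.free ∪ G.free
  | .all x F => F.free \ {x}
  | .exi x F => F.free \ {x}

/-- Variables occurring bound (i.e. quantified upon) in a formula. -/
def Fml.bound : Fml → Set ℕ
  | .tru => ∅
  | .fls => ∅
  | .atom _ _ _ => ∅
  | .neg F => F.bound
  | .conj F G => F.bound ∪ G.bound
  | .disj F G => F.bound ∪ G.bound
  | .all x F => insert x F.bound
  | .exi x F => insert x F.bound

def Fml.isQF : Fml → Prop
  | .tru => True
  | .fls => True
  | .atom _ _ _ => True
  | .neg F => F.isQF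
  | .conj F G => F.isQF ∧ G.isQF
  | .disj F G => F.isQF ∧ G.isQF
  | .all _ _ => False
  | .exi _ _ => False

def Fml.isGround (F : Fml) : Prop := F.isQF ∧ F.free = ∅

def Fml.isSentence (F : Fml) : Prop := F.free = ∅

/-- Substitutions: mappings from variables to terms. -/
abbrev Subst := ℕ → Tm

def Subst.dom (σ : Subst) : Set ℕ := {x | σ x ≠ Tm.var x}

def Subst.rng (σ : Subst) : Set Tm := {t | ∃ x ∈ σ.dom, σ x = t}

def Subst.isGround (σ : Subst) : Prop := ∀ x ∈ σ.dom, (σ x).isGround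

/-- Injective substitution: distinct domain variables are mapped to distinct terms. -/
def Subst.inj (σ : Subst) : Prop := ∀ x ∈ σ.dom, ∀ y ∈ σ.dom, σ x = σ y → x = y

def Tm.subst (σ : Subst) : Tm → Tm
  | .var x => σ x
  | .app f n ts => .app f n (fun i => (ts i).subst σ)

/-- Substitution application to formulas (free occurrences of variables are replaced). -/
def Fml.subst (σ : Subst) : Fml → Fml
  | .tru => .tru
  | .fls => .fls
  | .atom p n ts => .atom p n (fun i => (ts i).subst σ)
  | .neg F => .neg (F.subst σ)
  | .conj F G => .conj (F.subst σ) (G.subst σ)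
  | .disj F G => .disj (F.subst σ) (G.subst σ)
  | .all x F => .all x (F.subst (Function.update σ x (Tm.var x)))
  | .exi x F => .exi x (F.subst (Function.update σ x (Tm.var x)))

/-- Inverse application of an injective substitution to a term:
all rng(σ)-maximal occurrences of terms in the range of σ are replaced by
the corresponding domain variable. -/
noncomputable def Tm.inv (σ : Subst) : Tm → Tm
  | .var x =>
      if h : ∃ v ∈ Subst.dom σ, σ v = Tm.var x then Tm.var h.choose else Tm.var x
  | .app f n ts =>
      if h : ∃ v ∈ Subst.dom σ, σ v = Tm.app f n ts then Tm.var h.choose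
      else .app f n (fun i => Tm.inv σ (ts i))

/-- Inverse application of an injective substitution to a formula. -/
noncomputable def Fml.inv (σ : Subst) : Fml → Fml
  | .tru => .tru
  | .fls => .fls
  | .atom p n ts => .atom p n (fun i => Tm.inv σ (ts i))
  | .neg F => .neg (F.inv σ)
  | .conj F G => .conj (F.inv σ) (G.inv σ)
  | .disj F G => .disj (F.inv σ) (G.inv σ)
  | .all x F => .all x (F.inv σ)
  | .exi x F => .exi x (F.inv σ)

/-- `H` is a Craig-Lyndon interpolant of `F` and `G`. -/
def CLInterp (F G H : Fml) : Prop :=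
  entails F H ∧ entails H G ∧
  H.pred ⊆ F.pred ∩ G.pred ∧
  H.funs ⊆ F.funs ∩ G.funs ∧
  H.free ⊆ F.free ∩ G.free

/-- `H` is a Craig interpolant of `F` and `G` (no polarity constraint). -/
def CraigInterp (F G H : Fml) : Prop :=
  entails F H ∧ entails H G ∧
  H.predSyms ⊆ F.predSyms ∩ G.predSyms ∧
  H.funs ⊆ F.funs ∩ G.funs ∧
  H.free ⊆ F.free ∩ G.free

/-- An S-term: a term whose outermost function symbol is in `S`. -/
def isSTerm (S : Set (ℕ × ℕ)) : Tm → Prop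
  | .var _ => False
  | .app f n _ => (f, n) ∈ S

def STerms (S : Set (ℕ × ℕ)) : Set Tm := {t | isSTerm S t}

/-- `t` has a `T`-maximal occurrence in the given term: an occurrence that is
not within an occurrence of another member of `T`. -/
def Tm.hasMaxOcc (T : Set Tm) (t : Tm) : Tm → Prop
  | .var x => Tm.var x ∈ T ∧ t = Tm.var x
  | .app f n ts =>
      (Tm.app f n ts ∈ T ∧ t = Tm.app f n ts) ∨
      (Tm.app f n ts ∉ T ∧ ∃ i, Tm.hasMaxOcc T t (ts i))

/-- `t` has a `T`-maximal occurrence in the formula. -/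
def Fml.hasMaxOcc (T : Set Tm) (t : Tm) : Fml → Prop
  | .tru => False
  | .fls => False
  | .atom _ _ ts => ∃ i, Tm.hasMaxOcc T t (ts i)
  | .neg F => F.hasMaxOcc T t
  | .conj F G => F.hasMaxOcc T t ∨ G.hasMaxOcc T t
  | .disj F G => F.hasMaxOcc T t ∨ G.hasMaxOcc T t
  | .all _ F => F.hasMaxOcc T t
  | .exi _ F => F.hasMaxOcc T t

/-- Universal quantification over a list of variables. -/
def alls (xs : List ℕ) (F : Fml) : Fml := xs.foldr Fml.all F

end CTIF
namespace CTIF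

/-- Function symbols occurring in the quantifier-free parts of the sentence
∀X₁ C₁ ∧ … ∧ ∀Xₙ Cₙ, represented as the list of pairs (Xᵢ, Cᵢ). -/
def funsPS (ps : List (List ℕ × Fml)) : Set (ℕ × ℕ) := {fn | ∃ p ∈ ps, fn ∈ p.2.funs}

/-!
Ground instances are consequences of the universal closures, which gives one direction.
Conversely, suppose every finite set of ground instances is satisfiable. Reading atoms as
propositional letters, propositional compactness (a limit along an ultrafilter on the finite
subsets) yields a single valuation making all ground instances true. In the Herbrand
structure on ground terms over the symbols of S, with predicates interpreted by that
valuation, every ground term evaluates to itself, so an assignment `a` satisfies `Cᵢ` exactly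
when the valuation satisfies the ground instance `Cᵢ[a]`: the Herbrand structure is a model of S.
-/

abbrev AtomVal : Type := ℕ → (n : ℕ) → (Fin n → Tm) → Prop

/-- Propositional satisfaction; quantifiers are skipped, so this is only meaningful on
quantifier-free formulas. -/
def Fml.propSat (v : AtomVal) : Fml → Prop
  | .tru => True
  | .fls => False
  | .atom p n ts => v p n ts
  | .neg F => ¬ F.propSat v
  | .conj F G => F.propSat v ∧ G.propSat v
  | .disj F G => F.propSat v ∨ G.propSat v
  | .all _ F => F.propSat v
  | .exi _ F => F.propSat v

section Compactness

theorem Fml.propSat_ultrafilterLimit_iff {I : Type} (U : Ultrafilter I) (w : I → AtomVal)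
    (F : Fml) :
    F.propSat (fun p n ts => ∀ᶠ i in U, w i p n ts) ↔ ∀ᶠ i in U, F.propSat (w i) := by
  induction F with
  | tru => simp [Fml.propSat]
  | fls => simp [Fml.propSat, Filter.NeBot.ne inferInstance]
  | atom => rfl
  | neg F ih => simp only [Fml.propSat, ih, Ultrafilter.eventually_not]
  | conj F G ihF ihG => simp only [Fml.propSat, ihF, ihG, Filter.eventually_and]
  | disj F G ihF ihG => simp only [Fml.propSat, ihF, ihG, Ultrafilter.eventually_or]
  | all _ F ih => exact ih
  | exi _ F ih => exact ih

theorem exists_propSat_of_finite {Φ : Set Fml}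
    (h : ∀ L : List Fml, (∀ F ∈ L, F ∈ Φ) → ∃ v : AtomVal, ∀ F ∈ L, F.propSat v) :
    ∃ v : AtomVal, ∀ F ∈ Φ, F.propSat v := by
  have hfin (s : Finset Φ) : ∃ v : AtomVal, ∀ F ∈ s, F.1.propSat v := by
    obtain ⟨v, hv⟩ := h (s.toList.map Subtype.val) <| by
      simp only [List.mem_map]
      rintro _ ⟨F, -, rfl⟩
      exact F.2
    exact ⟨v, fun F hF => hv _ (List.mem_map_of_mem (Finset.mem_toList.2 hF))⟩
  choose w hw using hfin
  let U : Ultrafilter (Finset Φ) := .of Filter.atTop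
  refine ⟨fun p n ts => ∀ᶠ s in U, w s p n ts, fun F hF => ?_⟩
  rw [Fml.propSat_ultrafilterLimit_iff]
  filter_upwards [Ultrafilter.of_le Filter.atTop (Filter.eventually_ge_atTop {⟨F, hF⟩})]
    with s hs
  exact hw s ⟨F, hF⟩ (hs (Finset.mem_singleton_self _))

end Compactness

section Semantics

variable {D : Type} (M : Struc D)

theorem Fml.isQF.subst {F : Fml} (hF : F.isQF) (θ : Subst) : (F.subst θ).isQF := by
  induction F with
  | all | exi => exact hF.elim
  | neg F ih => exact ih hF
  | conj F G ihF ihG | disj F G ihF ihG => exact ⟨ihF hF.1, ihG hF.2⟩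
  | _ => trivial

theorem Fml.sat_iff_propSat {F : Fml} (hF : F.isQF) (a : ℕ → D) :
    F.sat M a ↔ F.propSat (fun p n ts => M.pr p n fun i => (ts i).eval M a) := by
  induction F with
  | all | exi => exact hF.elim
  | neg F ih => exact not_congr (ih hF)
  | conj F G ihF ihG => exact and_congr (ihF hF.1) (ihG hF.2)
  | disj F G ihF ihG => exact or_congr (ihF hF.1) (ihG hF.2)
  | _ => rfl

theorem Tm.eval_subst (θ : Subst) (a : ℕ → D) (t : Tm) :
    (t.subst θ).eval M a = t.eval M (fun x => (θ x).eval M a) := by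
  induction t with
  | var => rfl
  | app f n ts ih => simp only [Tm.subst, Tm.eval, ih]

theorem Fml.sat_subst {F : Fml} (hF : F.isQF) (θ : Subst) (a : ℕ → D) :
    (F.subst θ).sat M a ↔ F.sat M (fun x => (θ x).eval M a) := by
  induction F with
  | all | exi => exact hF.elim
  | atom p n ts => simp only [Fml.subst, Fml.sat, Tm.eval_subst]
  | neg F ih => exact not_congr (ih hF)
  | conj F G ihF ihG => exact and_congr (ihF hF.1) (ihG hF.2)
  | disj F G ihF ihG => exact or_congr (ihF hF.1) (ihG hF.2)
  | _ => exact Iff.rfl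

end Semantics

section Herbrand

variable (S : Set (ℕ × ℕ))

abbrev HerbrandUniverse : Type := {t : Tm // t.builtFrom S}

/-- The Herbrand structure; symbols outside `S` are sent to the junk value `d₀`. -/
noncomputable def herbrandStruc (d₀ : HerbrandUniverse S) (v : AtomVal) :
    Struc (HerbrandUniverse S) where
  fn f n args :=
    if h : (f, n) ∈ S then ⟨.app f n (fun i => (args i).1), h, fun i => (args i).2⟩ else d₀
  pr p n args := v p n (fun i => (args i).1)

variable {S} (d₀ : HerbrandUniverse S) (v : AtomVal) (a : ℕ → HerbrandUniverse S)

theorem Tm.eval_herbrandStruc {t : Tm} (ht : t.funs ⊆ S) :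
    (t.eval (herbrandStruc S d₀ v) a).1 = t.subst (fun x => a x) := by
  induction t with
  | var => rfl
  | app f n ts ih =>
    have hf : (f, n) ∈ S := ht (Set.mem_insert _ _)
    have hts i : (ts i).funs ⊆ S :=
      fun g hg => ht (Set.mem_insert_of_mem _ (Set.mem_iUnion_of_mem i hg))
    simp only [Tm.eval, herbrandStruc, dif_pos hf, Tm.subst]
    exact congrArg _ (funext fun i => ih i (hts i))

theorem Fml.sat_herbrandStruc_iff {F : Fml} (hF : F.isQF) (hS : F.funs ⊆ S) :
    F.sat (herbrandStruc S d₀ v) a ↔ (F.subst (fun x => a x)).propSat v := by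
  induction F with
  | all | exi => exact hF.elim
  | atom p n ts =>
    have hts i : (ts i).funs ⊆ S := fun g hg => hS (Set.mem_iUnion_of_mem i hg)
    exact iff_of_eq (congrArg (v p n) (funext fun i => Tm.eval_herbrandStruc d₀ v a (hts i)))
  | neg F ih => exact not_congr (ih hF hS)
  | conj F G ihF ihG =>
    exact and_congr (ihF hF.1 fun _ h => hS (.inl h)) (ihG hF.2 fun _ h => hS (.inr h))
  | disj F G ihF ihG =>
    exact or_congr (ihF hF.1 fun _ h => hS (.inl h)) (ihG hF.2 fun _ h => hS (.inr h))
  | _ => exact Iff.rfl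

end Herbrand

theorem exists_const_mem_union_ite (T : Set (ℕ × ℕ)) (c₀ : ℕ) :
    ∃ c, (c, 0) ∈ T ∪ (if ∃ f, (f, 0) ∈ T then ∅ else {(c₀, 0)}) := by
  split_ifs with h
  · obtain ⟨c, hc⟩ := h
    exact ⟨c, .inl hc⟩
  · exact ⟨c₀, .inr rfl⟩

theorem statement9_general (ps : List (List ℕ × Fml)) (c₀ : ℕ)
    (hqf : ∀ p ∈ ps, p.2.isQF) :
    (∀ (D : Type), Nonempty D → ∀ M : Struc D, ¬ ∀ p ∈ ps, ∀ a : ℕ → D, p.2.sat M a)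
    ↔
    (∃ L : List Fml,
      (∀ H ∈ L, ∃ p ∈ ps, ∃ θ : Subst,
        (∀ x ∈ p.2.free,
          (θ x).builtFrom (funsPS ps ∪
            (if ∃ f, (f, 0) ∈ funsPS ps then ∅ else {(c₀, 0)}))) ∧
        H = p.2.subst θ) ∧
      (∀ (D : Type), Nonempty D → ∀ (M : Struc D) (a : ℕ → D), ¬ ∀ H ∈ L, H.sat M a)) := by
  set S := funsPS ps ∪ (if ∃ f, (f, 0) ∈ funsPS ps then ∅ else {(c₀, 0)})
  constructor
  · intro hunsat
    by_contra! hfinSat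
    obtain ⟨v, hv⟩ := exists_propSat_of_finite fun L hL => by
      obtain ⟨D, -, M, a, hM⟩ := hfinSat L hL
      refine ⟨_, fun H hH => (Fml.sat_iff_propSat M ?_ a).1 (hM H hH)⟩
      obtain ⟨p, hp, θ, -, rfl⟩ := hL H hH
      exact (hqf p hp).subst θ
    obtain ⟨c, hc⟩ := exists_const_mem_union_ite (funsPS ps) c₀
    let d₀ : HerbrandUniverse S := ⟨.app c 0 Fin.elim0, hc, fun i => i.elim0⟩
    refine hunsat _ ⟨d₀⟩ (herbrandStruc S d₀ v) fun p hp a => ?_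
    rw [Fml.sat_herbrandStruc_iff d₀ v a (hqf p hp) fun g hg => .inl ⟨p, hp, hg⟩]
    exact hv _ ⟨p, hp, _, fun x _ => (a x).2, rfl⟩
  · rintro ⟨L, hL, hunsat⟩ D hD M hM
    refine hunsat D hD M (fun _ => hD.some) fun H hH => ?_
    obtain ⟨p, hp, θ, -, rfl⟩ := hL H hH
    exact (Fml.sat_subst M (hqf p hp) θ _).2 (hM p hp _)

/-- A form of Herbrand's theorem. A sentence S = ∀X₁ C₁ ∧ … ∧ ∀Xₙ Cₙ
(Cᵢ quantifier-free, without equality) is unsatisfiable iff there is a finite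
unsatisfiable conjunction of ground instances of the Cᵢ, instantiated with ground
terms over the function symbols of S (plus a fresh constant c₀ if no constant
occurs in S). -/
theorem statement9 (ps : List (List ℕ × Fml)) (c₀ : ℕ)
    (hqf : ∀ p ∈ ps, p.2.isQF)
    (hsent : ∀ p ∈ ps, p.2.free ⊆ {x | x ∈ p.1})
    (hfresh : (c₀, 0) ∉ funsPS ps) :
    (∀ (D : Type), Nonempty D → ∀ M : Struc D, ¬ ∀ p ∈ ps, ∀ a : ℕ → D, p.2.sat M a)
    ↔
    (∃ L : List Fml,
      (∀ H ∈ L, ∃ p ∈ ps, ∃ θ : Subst,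
        (∀ x ∈ p.2.free,
          (θ x).builtFrom (funsPS ps ∪
            (if ∃ f, (f, 0) ∈ funsPS ps then ∅ else {(c₀, 0)}))) ∧
        H = p.2.subst θ) ∧
      (∀ (D : Type), Nonempty D → ∀ (M : Struc D) (a : ℕ → D), ¬ ∀ H ∈ L, H.sat M a)) :=
  statement9_general ps c₀ hqf

end CTIF
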